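/- For the TRW coframe and connection, the torsion scalar T := (1/2) T^a_{μν} S_a^{μν} satisfies, at every point (t,r,θ,φ) of U, T = 6(ȧ/a)² + 12 W₁ (ȧ/a) + 6 W₁² − 6 W₂², where ȧ = a'(t); equivalently T = 6(ȧ/a + W₁ + W₂)(ȧ/a + W₁ − W₂). -/

import Mathlib

open Real
open scoped ContDiff

noncomputable section

/-- Partial derivative in the μ-th coordinate direction. -/
def pd (μ : Fin 4) (f : (Fin 4 → ℝ) → ℝ) (x : Fin 4 → ℝ) : ℝ :=
  fderiv ℝ f x (Pi.single μ 1)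

/-- The Minkowski metric η = diag(−1,1,1,1) on frame indices. -/
def eta : Matrix (Fin 4) (Fin 4) ℝ := Matrix.diagonal ![-1, 1, 1, 1]

/-- The TRW coframe h^a_μ = diag(1, a/χ, a r, a r sinθ), χ = √(1 − k r²);
rows are frame indices a, columns are coordinate indices μ. -/
def hco (k : ℝ) (a : ℝ → ℝ) (x : Fin 4 → ℝ) : Matrix (Fin 4) (Fin 4) ℝ :=
  Matrix.diagonal
    ![1, a (x 0) / Real.sqrt (1 - k * (x 1) ^ 2),
      a (x 0) * (x 1), a (x 0) * (x 1) * Real.sin (x 2)]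

/-- The inverse frame h_a^μ = diag(1, χ/a, 1/(a r), 1/(a r sinθ));
rows are frame indices a, columns are coordinate indices μ. -/
def hin (k : ℝ) (a : ℝ → ℝ) (x : Fin 4 → ℝ) : Matrix (Fin 4) (Fin 4) ℝ :=
  Matrix.diagonal
    ![1, Real.sqrt (1 - k * (x 1) ^ 2) / a (x 0),
      1 / (a (x 0) * (x 1)), 1 / (a (x 0) * (x 1) * Real.sin (x 2))]

/-- The matrices ω_μ = (ω^a_{bμ}) of the TRW connection, obtained from the
antisymmetric one-forms ω_{12} = W₁(a/χ) dr, ω_{13} = W₁ a r dθ,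
ω_{14} = W₁ a r sinθ dφ, ω_{23} = −χ dθ + W₂ a r sinθ dφ,
ω_{24} = −W₂ a r dθ − χ sinθ dφ, ω_{34} = W₂(a/χ) dr − cosθ dφ,
via ω^a_{bμ} = η^{ac} ω_{cbμ}. -/
def omegaTRW (k : ℝ) (a W₁ W₂ : ℝ → ℝ) (μ : Fin 4) (x : Fin 4 → ℝ) :
    Matrix (Fin 4) (Fin 4) ℝ :=
  let t := x 0
  let r := x 1
  let θ := x 2
  let χ := Real.sqrt (1 - k * r ^ 2)
  ![(0 : Matrix (Fin 4) (Fin 4) ℝ),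
    !![0, -(W₁ t * a t / χ), 0, 0;
       -(W₁ t * a t / χ), 0, 0, 0;
       0, 0, 0, W₂ t * a t / χ;
       0, 0, -(W₂ t * a t / χ), 0],
    !![0, 0, -(W₁ t * a t * r), 0;
       0, 0, -χ, -(W₂ t * a t * r);
       -(W₁ t * a t * r), χ, 0, 0;
       0, W₂ t * a t * r, 0, 0],
    !![0, 0, 0, -(W₁ t * a t * r * Real.sin θ);
       0, 0, W₂ t * a t * r * Real.sin θ, -(χ * Real.sin θ);
       0, -(W₂ t * a t * r * Real.sin θ), 0, -Real.cos θ;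
       -(W₁ t * a t * r * Real.sin θ), χ * Real.sin θ, Real.cos θ, 0]] μ

/-- Torsion tensor T^a_{μν} = ∂_μ h^a_ν − ∂_ν h^a_μ + ω^a_{bμ} h^b_ν − ω^a_{bν} h^b_μ. -/
def Tor (k : ℝ) (a W₁ W₂ : ℝ → ℝ) (x : Fin 4 → ℝ) (A μ ν : Fin 4) : ℝ :=
  pd μ (fun y => hco k a y A ν) x - pd ν (fun y => hco k a y A μ) x
    + ∑ b, (omegaTRW k a W₁ W₂ μ x A b * hco k a x b ν
        - omegaTRW k a W₁ W₂ ν x A b * hco k a x b μ)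

/-- Inverse metric g^{μν} = η^{ab} h_a^μ h_b^ν. -/
def ginv (k : ℝ) (a : ℝ → ℝ) (x : Fin 4 → ℝ) (μ ν : Fin 4) : ℝ :=
  ∑ b, ∑ c, eta b c * hin k a x b μ * hin k a x c ν

/-- Spacetime-indexed torsion T^ρ_{μν} = h_a^ρ T^a_{μν}. -/
def Tst (k : ℝ) (a W₁ W₂ : ℝ → ℝ) (x : Fin 4 → ℝ) (ρ μ ν : Fin 4) : ℝ :=
  ∑ A, hin k a x A ρ * Tor k a W₁ W₂ x A μ ν

/-- The torsion vector trace T^{φμ}_{ φ} (index raised with g). -/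
def Vtr (k : ℝ) (a W₁ W₂ : ℝ → ℝ) (x : Fin 4 → ℝ) (μ : Fin 4) : ℝ :=
  ∑ σ, ∑ α, ginv k a x μ α * Tst k a W₁ W₂ x σ α σ

/-- T_a^{μν} = η_{ab} g^{μα} g^{νβ} T^b_{αβ}. -/
def Tlow (k : ℝ) (a W₁ W₂ : ℝ → ℝ) (x : Fin 4 → ℝ) (A μ ν : Fin 4) : ℝ :=
  ∑ B, ∑ α, ∑ β,
    eta A B * ginv k a x μ α * ginv k a x ν β * Tor k a W₁ W₂ x B α β

/-- T^{νμ}_{ a} = h_a^β g^{μα} T^ν_{αβ}. -/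
def Tnm (k : ℝ) (a W₁ W₂ : ℝ → ℝ) (x : Fin 4 → ℝ) (A μ ν : Fin 4) : ℝ :=
  ∑ α, ∑ β, hin k a x A β * ginv k a x μ α * Tst k a W₁ W₂ x ν α β

/-- T^{μν}_{ a} = h_a^β g^{να} T^μ_{αβ}. -/
def Tmn (k : ℝ) (a W₁ W₂ : ℝ → ℝ) (x : Fin 4 → ℝ) (A μ ν : Fin 4) : ℝ :=
  ∑ α, ∑ β, hin k a x A β * ginv k a x ν α * Tst k a W₁ W₂ x μ α β

/-- Superpotential
S_a^{μν} = (1/2)(T_a^{μν} + T^{νμ}_a − T^{μν}_a) − h_a^ν T^{φμ}_φ + h_a^μ T^{φν}_φ. -/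
def Spot (k : ℝ) (a W₁ W₂ : ℝ → ℝ) (x : Fin 4 → ℝ) (A μ ν : Fin 4) : ℝ :=
  (1 / 2) * (Tlow k a W₁ W₂ x A μ ν + Tnm k a W₁ W₂ x A μ ν - Tmn k a W₁ W₂ x A μ ν)
    - hin k a x A ν * Vtr k a W₁ W₂ x μ + hin k a x A μ * Vtr k a W₁ W₂ x ν

/-- The torsion scalar T = (1/2) T^a_{μν} S_a^{μν}. -/
def Tscal (k : ℝ) (a W₁ W₂ : ℝ → ℝ) (x : Fin 4 → ℝ) : ℝ :=
  (1 / 2) * ∑ A, ∑ μ, ∑ ν, Tor k a W₁ W₂ x A μ ν * Spot k a W₁ W₂ x A μ ν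

/-!
The TRW coframe is diagonal, h^a_μ = e_μ δ^a_μ, so every tensor entering the torsion scalar can
be read in the orthonormal frame, where indices are moved by η alone and all the factors e_μ
cancel: T is the same quadratic expression in the frame components τ^A_{BC} = T^A_{μν}/(e_μ e_ν),
computed with η. For the TRW connection these components are constant in space. With
H = ȧ/a + W₁ they are τ^i_{0j} = H δ^i_j (an isotropic vector part) and τ^i_{jk} = −2W₂ ε_{ijk}
(a purely axial part), and the frame scalar of such a torsion is 6H² − 6W₂².
-/

-- Counterparts of `Vtr`, `Spot` and `Tscal` in which every index is an orthonormal-frame index,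
-- so that g is replaced by the diagonal η and `τ A B C` stands for τ^A_{BC}.
def frameTorsionVector (τ : Fin 4 → Fin 4 → Fin 4 → ℝ) (B : Fin 4) : ℝ :=
  eta B B * ∑ D, τ D B D

def frameSuperpotential (τ : Fin 4 → Fin 4 → Fin 4 → ℝ) (A B C : Fin 4) : ℝ :=
  (1 / 2) * (eta A A * eta B B * eta C C * τ A B C + eta B B * τ C B A - eta C C * τ B C A)
    - (if A = C then frameTorsionVector τ B else 0)
    + (if A = B then frameTorsionVector τ C else 0)

def frameTorsionScalar (τ : Fin 4 → Fin 4 → Fin 4 → ℝ) : ℝ :=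
  (1 / 2) * ∑ A, ∑ B, ∑ C, τ A B C * frameSuperpotential τ A B C

section DiagonalCoframe

variable {k : ℝ} {a W₁ W₂ : ℝ → ℝ} {x : Fin 4 → ℝ} {e : Fin 4 → ℝ}
  {τ : Fin 4 → Fin 4 → Fin 4 → ℝ}

lemma ginv_of_hin_eq_diagonal (he : hin k a x = Matrix.diagonal fun μ => (e μ)⁻¹)
    (μ ν : Fin 4) : ginv k a x μ ν = eta μ ν * (e μ)⁻¹ * (e ν)⁻¹ := by
  simp [ginv, he, Matrix.diagonal_apply]

lemma Spot_of_hin_eq_diagonal (he : hin k a x = Matrix.diagonal fun μ => (e μ)⁻¹)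
    (he₀ : ∀ μ, e μ ≠ 0) (hT : ∀ A μ ν, Tor k a W₁ W₂ x A μ ν = e μ * e ν * τ A μ ν)
    (A μ ν : Fin 4) :
    Spot k a W₁ W₂ x A μ ν = (e μ)⁻¹ * (e ν)⁻¹ * frameSuperpotential τ A μ ν := by
  simp only [Spot, Tlow, Tnm, Tmn, Vtr, Tst, ginv_of_hin_eq_diagonal he, he, hT, eta,
    frameSuperpotential, frameTorsionVector, Matrix.diagonal_apply, ite_mul, mul_ite, zero_mul,
    mul_zero, Finset.sum_ite_eq, Finset.sum_ite_eq', Finset.sum_ite_irrel, Finset.sum_const_zero,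
    Finset.mem_univ, ↓reduceIte]
  have hcancel : ∀ σ β, (e σ)⁻¹ * (e β * e σ * τ σ β σ) = e β * τ σ β σ := fun σ β => by
    field_simp [he₀ σ]
  simp only [hcancel, ← Finset.mul_sum]
  split_ifs <;> subst_vars <;> field_simp [he₀] <;> ring

lemma Tscal_of_hin_eq_diagonal (he : hin k a x = Matrix.diagonal fun μ => (e μ)⁻¹)
    (he₀ : ∀ μ, e μ ≠ 0) (hT : ∀ A μ ν, Tor k a W₁ W₂ x A μ ν = e μ * e ν * τ A μ ν) :
    Tscal k a W₁ W₂ x = frameTorsionScalar τ := by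
  unfold Tscal frameTorsionScalar
  congr 1
  refine Fintype.sum_congr _ _ fun A => Fintype.sum_congr _ _ fun μ =>
    Fintype.sum_congr _ _ fun ν => ?_
  rw [hT, Spot_of_hin_eq_diagonal he he₀ hT]
  field_simp [he₀]

end DiagonalCoframe

def trwFrameTorsion (H W : ℝ) : Fin 4 → Fin 4 → Fin 4 → ℝ :=
  ![![![0, 0, 0, 0], ![0, 0, 0, 0], ![0, 0, 0, 0], ![0, 0, 0, 0]],
    ![![0, H, 0, 0], ![-H, 0, 0, 0], ![0, 0, 0, -2 * W], ![0, 0, 2 * W, 0]],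
    ![![0, 0, H, 0], ![0, 0, 0, 2 * W], ![-H, 0, 0, 0], ![0, -2 * W, 0, 0]],
    ![![0, 0, 0, H], ![0, 0, -2 * W, 0], ![0, 2 * W, 0, 0], ![-H, 0, 0, 0]]]

lemma frameTorsionScalar_trwFrameTorsion (H W : ℝ) :
    frameTorsionScalar (trwFrameTorsion H W) = 6 * H ^ 2 - 6 * W ^ 2 := by
  simp only [frameTorsionScalar, frameSuperpotential, frameTorsionVector, trwFrameTorsion, eta,
    Matrix.diagonal_apply_eq, Fin.sum_univ_four, Matrix.cons_val, Fin.isValue, Fin.reduceEq,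
    if_true, if_false]
  ring

section CoframeDerivatives

variable {k : ℝ} {a : ℝ → ℝ} {x : Fin 4 → ℝ}

lemma pd_eq_of_hasFDerivAt {f : (Fin 4 → ℝ) → ℝ} {L : (Fin 4 → ℝ) →L[ℝ] ℝ}
    (h : HasFDerivAt f L x) (μ : Fin 4) : pd μ f x = L (Pi.single μ 1) := by
  rw [pd, h.fderiv]

lemma pd_const (c : ℝ) (μ : Fin 4) : pd μ (fun _ => c) x = 0 := by
  simp [pd]

lemma hasFDerivAt_comp_apply {g : ℝ → ℝ} {g' : ℝ} (i : Fin 4) (h : HasDerivAt g g' (x i)) :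
    HasFDerivAt (fun y : Fin 4 → ℝ => g (y i))
      (g' • (ContinuousLinearMap.proj i : (Fin 4 → ℝ) →L[ℝ] ℝ)) x := by
  simpa [Function.comp_def] using h.comp_hasFDerivAt x (hasFDerivAt_apply i x)

lemma hasDerivAt_inv_sqrt_one_sub_mul_sq {r : ℝ} (hk : 0 < 1 - k * r ^ 2) :
    HasDerivAt (fun r : ℝ => (√(1 - k * r ^ 2))⁻¹) (k * r / √(1 - k * r ^ 2) ^ 3) r := by
  have hχ : √(1 - k * r ^ 2) ≠ 0 := (Real.sqrt_pos.2 hk).ne'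
  have hpoly : HasDerivAt (fun r : ℝ => 1 - k * r ^ 2) (-(k * (2 * r))) r := by
    simpa using ((hasDerivAt_pow 2 r).const_mul k).const_sub 1
  refine ((hpoly.sqrt hk.ne').inv hχ).congr_deriv ?_
  field_simp

lemma pd_scale_div_sqrt (ha : DifferentiableAt ℝ a (x 0)) (hk : 0 < 1 - k * x 1 ^ 2)
    (μ : Fin 4) :
    pd μ (fun y => a (y 0) / √(1 - k * y 1 ^ 2)) x
      = ![deriv a (x 0) / √(1 - k * x 1 ^ 2), a (x 0) * (k * x 1) / √(1 - k * x 1 ^ 2) ^ 3,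
          0, 0] μ := by
  simp only [div_eq_mul_inv]
  refine (pd_eq_of_hasFDerivAt ((hasFDerivAt_comp_apply 0 ha.hasDerivAt).mul
    (hasFDerivAt_comp_apply 1 (hasDerivAt_inv_sqrt_one_sub_mul_sq hk))) μ).trans ?_
  fin_cases μ <;> simp <;> ring

lemma pd_scale_mul_radius (ha : DifferentiableAt ℝ a (x 0)) (μ : Fin 4) :
    pd μ (fun y => a (y 0) * y 1) x = ![deriv a (x 0) * x 1, a (x 0), 0, 0] μ := by
  refine (pd_eq_of_hasFDerivAt ((hasFDerivAt_comp_apply 0 ha.hasDerivAt).mul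
    (hasFDerivAt_apply 1 x)) μ).trans ?_
  fin_cases μ <;> simp [mul_comm]

lemma pd_scale_mul_radius_mul_sin (ha : DifferentiableAt ℝ a (x 0)) (μ : Fin 4) :
    pd μ (fun y => a (y 0) * y 1 * Real.sin (y 2)) x
      = ![deriv a (x 0) * x 1 * Real.sin (x 2), a (x 0) * Real.sin (x 2),
          a (x 0) * x 1 * Real.cos (x 2), 0] μ := by
  refine (pd_eq_of_hasFDerivAt (((hasFDerivAt_comp_apply 0 ha.hasDerivAt).mul
    (hasFDerivAt_apply 1 x)).mul (hasFDerivAt_comp_apply 2 (Real.hasDerivAt_sin (x 2)))) μ).trans ?_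
  fin_cases μ <;> simp <;> ring

end CoframeDerivatives

section TRW

variable {k : ℝ} {a W₁ W₂ : ℝ → ℝ} {x : Fin 4 → ℝ}

lemma hin_eq_diagonal_inv_hco : hin k a x = Matrix.diagonal fun μ => (hco k a x μ μ)⁻¹ := by
  ext μ ν
  fin_cases μ <;> fin_cases ν <;> simp [hin, hco]

lemma hco_apply_self_ne_zero (ha : a (x 0) ≠ 0) (hr : x 1 ≠ 0) (hs : Real.sin (x 2) ≠ 0)
    (hk : 0 < 1 - k * x 1 ^ 2) (μ : Fin 4) : hco k a x μ μ ≠ 0 := by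
  have hχ : √(1 - k * x 1 ^ 2) ≠ 0 := (Real.sqrt_pos.2 hk).ne'
  fin_cases μ <;> simp [hco, ha, hr, hs, hχ]

lemma Tor_eq_trwFrameTorsion (ha : DifferentiableAt ℝ a (x 0)) (ha₀ : a (x 0) ≠ 0)
    (hk : 0 < 1 - k * x 1 ^ 2) (A μ ν : Fin 4) :
    Tor k a W₁ W₂ x A μ ν = hco k a x μ μ * hco k a x ν ν *
      trwFrameTorsion (deriv a (x 0) / a (x 0) + W₁ (x 0)) (W₂ (x 0)) A μ ν := by
  fin_cases A <;> fin_cases μ <;> fin_cases ν <;>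
    simp [Tor, hco, omegaTRW, trwFrameTorsion, Matrix.diagonal_apply, pd_const,
      pd_scale_div_sqrt ha hk, pd_scale_mul_radius ha, pd_scale_mul_radius_mul_sin ha]
  all_goals field_simp <;> ring

end TRW

theorem TRW_torsion_scalar_general (k : ℝ) (a W₁ W₂ : ℝ → ℝ)
    (ha : ContDiff ℝ ∞ a) (hapos : ∀ t, 0 < a t)
    (x : Fin 4 → ℝ) (hr : 0 < x 1) (hθ₁ : 0 < x 2) (hθ₂ : x 2 < Real.pi)
    (hk : 0 < 1 - k * (x 1) ^ 2) :
    Tscal k a W₁ W₂ x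
        = 6 * (deriv a (x 0) / a (x 0)) ^ 2
          + 12 * W₁ (x 0) * (deriv a (x 0) / a (x 0))
          + 6 * (W₁ (x 0)) ^ 2 - 6 * (W₂ (x 0)) ^ 2 ∧
    Tscal k a W₁ W₂ x
        = 6 * (deriv a (x 0) / a (x 0) + W₁ (x 0) + W₂ (x 0))
          * (deriv a (x 0) / a (x 0) + W₁ (x 0) - W₂ (x 0)) := by
  have ha₀ : a (x 0) ≠ 0 := (hapos (x 0)).ne'
  have hsin : Real.sin (x 2) ≠ 0 := (Real.sin_pos_of_pos_of_lt_pi hθ₁ hθ₂).ne'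
  have hTscal : Tscal k a W₁ W₂ x
      = 6 * (deriv a (x 0) / a (x 0) + W₁ (x 0)) ^ 2 - 6 * W₂ (x 0) ^ 2 := by
    rw [Tscal_of_hin_eq_diagonal hin_eq_diagonal_inv_hco
      (hco_apply_self_ne_zero ha₀ hr.ne' hsin hk)
      (Tor_eq_trwFrameTorsion (ha.differentiable (by simp) (x 0)) ha₀ hk),
      frameTorsionScalar_trwFrameTorsion]
  constructor <;> rw [hTscal] <;> ring

/-- The torsion scalar of the TRW geometry:
T = 6(ȧ/a)² + 12 W₁ (ȧ/a) + 6W₁² − 6W₂² = 6(ȧ/a + W₁ + W₂)(ȧ/a + W₁ − W₂). -/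
theorem TRW_torsion_scalar (k : ℝ) (a W₁ W₂ : ℝ → ℝ)
    (ha : ContDiff ℝ ∞ a) (hapos : ∀ t, 0 < a t)
    (hW₁ : ContDiff ℝ ∞ W₁) (hW₂ : ContDiff ℝ ∞ W₂)
    (x : Fin 4 → ℝ) (hr : 0 < x 1) (hθ₁ : 0 < x 2) (hθ₂ : x 2 < Real.pi)
    (hk : 0 < 1 - k * (x 1) ^ 2) :
    Tscal k a W₁ W₂ x
        = 6 * (deriv a (x 0) / a (x 0)) ^ 2
          + 12 * W₁ (x 0) * (deriv a (x 0) / a (x 0))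
          + 6 * (W₁ (x 0)) ^ 2 - 6 * (W₂ (x 0)) ^ 2 ∧
    Tscal k a W₁ W₂ x
        = 6 * (deriv a (x 0) / a (x 0) + W₁ (x 0) + W₂ (x 0))
          * (deriv a (x 0) / a (x 0) + W₁ (x 0) - W₂ (x 0)) :=
  TRW_torsion_scalar_general k a W₁ W₂ ha hapos x hr hθ₁ hθ₂ hk

end
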